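/- Let V be a topological vector space, A ⊆ V cs-closed, and G ⊆ D ⊆ cl(A). Suppose G is pre-cs-compact and that for every r > 0 and d ∈ D, the set (d − rG) ∩ A is nonempty. Then D ⊆ αA for every α > 1. -/

import Mathlib

open Pointwise

/-- A set is pre-cs-compact if every convex series of its elements converges. -/
def IsPreCsCompact {V : Type*} [AddCommGroup V] [Module ℝ V] [TopologicalSpace V]
    (G : Set V) : Prop :=
  ∀ (g : ℕ → V) (l : ℕ → ℝ), (∀ n, g n ∈ G) → (∀ n, 0 ≤ l n) → HasSum l 1 →
    ∃ x : V, HasSum (fun n => l n • g n) x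

/-- A set is cs-closed if every convergent convex series of its elements has sum in it. -/
def IsCsClosed {V : Type*} [AddCommGroup V] [Module ℝ V] [TopologicalSpace V]
    (A : Set V) : Prop :=
  ∀ (a : ℕ → V) (l : ℕ → ℝ), (∀ n, a n ∈ A) → (∀ n, 0 ≤ l n) → HasSum l 1 →
    ∀ x : V, HasSum (fun n => l n • a n) x → x ∈ A

/-!
Put `r = 1 - α⁻¹`. Starting from `d₀ = d`, the hypothesis yields `dₙ₊₁ ∈ G ⊆ D` with
`aₙ = dₙ - r • dₙ₊₁ ∈ A`. Pre-cs-compactness of `G` makes `∑ rⁿ • dₙ₊₁` converge, so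
`∑ rⁿ • aₙ` telescopes to `d`, and cs-closedness of `A` puts the convex combination
`∑ (1 - r) rⁿ • aₙ = α⁻¹ • d` in `A`.
-/

theorem hasSum_sub_succ_of_summable {V : Type*} [AddCommGroup V] [TopologicalSpace V]
    [IsTopologicalAddGroup V] {u : ℕ → V} (hu : Summable u) :
    HasSum (fun n => u n - u (n + 1)) (u 0) := by
  obtain ⟨s, hs⟩ := hu
  have hshift : HasSum (fun n => u (n + 1)) (s - u 0) := by
    simpa using (hasSum_nat_add_iff' 1).2 hs
  simpa using hs.sub hshift

theorem hasSum_one_sub_mul_geometric {r : ℝ} (hr₀ : 0 ≤ r) (hr₁ : r < 1) :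
    HasSum (fun n => (1 - r) * r ^ n) 1 := by
  simpa [mul_inv_cancel₀ (sub_ne_zero.2 hr₁.ne')] using
    (hasSum_geometric_of_lt_one hr₀ hr₁).mul_left (1 - r)

theorem exists_seq_of_forall_exists_mem {α : Type*} {D G : Set α} {P : α → α → Prop}
    (hGD : G ⊆ D) (h : ∀ d ∈ D, ∃ g ∈ G, P d g) {d : α} (hd : d ∈ D) :
    ∃ x : ℕ → α, x 0 = d ∧ (∀ n, x (n + 1) ∈ G) ∧ ∀ n, P (x n) (x (n + 1)) := by
  choose f hfG hfP using h
  let step : D → D := fun p => ⟨f p p.2, hGD (hfG p p.2)⟩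
  refine ⟨fun n => (step^[n] ⟨d, hd⟩).1, rfl, fun n => ?_, fun n => ?_⟩
  · simp only [Function.iterate_succ_apply']
    exact hfG _ _
  · simp only [Function.iterate_succ_apply']
    exact hfP _ _

section GeometricSeries

variable {V : Type*} [AddCommGroup V] [Module ℝ V] [TopologicalSpace V]
  [ContinuousConstSMul ℝ V] {r : ℝ}

theorem IsPreCsCompact.summable_geometric_smul {G : Set V} (hG : IsPreCsCompact G)
    {g : ℕ → V} (hg : ∀ n, g n ∈ G) (hr₀ : 0 ≤ r) (hr₁ : r < 1) :
    Summable fun n => r ^ n • g n := by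
  obtain ⟨x, hx⟩ := hG g _ hg (fun n => mul_nonneg (sub_nonneg.2 hr₁.le) (pow_nonneg hr₀ n))
    (hasSum_one_sub_mul_geometric hr₀ hr₁)
  refine (hx.const_smul (1 - r)⁻¹).summable.congr fun n => ?_
  rw [smul_smul, ← mul_assoc, inv_mul_cancel₀ (sub_ne_zero.2 hr₁.ne'), one_mul]

theorem IsCsClosed.one_sub_smul_mem_of_hasSum {A : Set V} (hA : IsCsClosed A)
    {a : ℕ → V} (ha : ∀ n, a n ∈ A) (hr₀ : 0 ≤ r) (hr₁ : r < 1) {x : V}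
    (hx : HasSum (fun n => r ^ n • a n) x) : (1 - r) • x ∈ A :=
  hA a _ ha (fun n => mul_nonneg (sub_nonneg.2 hr₁.le) (pow_nonneg hr₀ n))
    (hasSum_one_sub_mul_geometric hr₀ hr₁) _ (by simpa [smul_smul] using hx.const_smul (1 - r))

end GeometricSeries

theorem subset_dilation_of_csClosed
    {V : Type*} [AddCommGroup V] [Module ℝ V] [TopologicalSpace V]
    [IsTopologicalAddGroup V] [ContinuousSMul ℝ V]
    (A G D : Set V) (hA : IsCsClosed A) (hGD : G ⊆ D)
    (hG : IsPreCsCompact G)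
    (h : ∀ r : ℝ, 0 < r → ∀ d ∈ D, ∃ g ∈ G, d - r • g ∈ A)
    (α : ℝ) (hα : 1 < α) : D ⊆ α • A := by
  intro d hd
  have hα₀ : 0 < α := one_pos.trans hα
  set r := 1 - α⁻¹
  have hr₀ : 0 < r := sub_pos.2 (inv_lt_one_of_one_lt₀ hα)
  have hr₁ : r < 1 := sub_lt_self 1 (inv_pos.2 hα₀)
  obtain ⟨x, rfl, hxG, hxA⟩ := exists_seq_of_forall_exists_mem hGD (h r hr₀) hd
  have hsummable : Summable fun n => r ^ n • x n := by
    refine (summable_nat_add_iff 1).1 ?_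
    simpa [pow_succ', mul_smul] using (hG.summable_geometric_smul hxG hr₀.le hr₁).const_smul r
  have htelescope : HasSum (fun n => r ^ n • (x n - r • x (n + 1))) (x 0) := by
    simpa [pow_succ, mul_smul, smul_sub] using hasSum_sub_succ_of_summable hsummable
  rw [Set.mem_smul_set_iff_inv_smul_mem₀ hα₀.ne', show α⁻¹ = 1 - r by ring]
  exact hA.one_sub_smul_mem_of_hasSum hxA hr₀.le hr₁ htelescope
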